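/- Let A = A_1 ⊞_s A_2 where A_1 ∈ M_g, A_2 ∈ M_h, g + h = j, and s ≤ all off-diagonal entries of A_1 and A_2, with s ≤ 1 - η. Then χ(A) = g(s, χ(A_1), χ(A_2)) where g(t,b,c) := (b + c - 2tbc)/(1 - t²bc), and χ(B) denotes the sum of all entries of B⁻¹ for an invertible matrix B. -/

import Mathlib

/-- Membership in the class `M_j` of ultrametric matrices from the paper. -/
def MemUltra (η : ℝ) {ι : Type*} [Fintype ι] [DecidableEq ι] (A : Matrix ι ι ℝ) : Prop :=
  A.IsSymm ∧ (∀ i, A i i = 1) ∧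
  (∀ i l, i ≠ l → 0 ≤ A i l ∧ A i l ≤ 1 - η) ∧
  (∀ i l p, i ≠ l → l ≠ p → i ≠ p → min (A l p) (A i p) ≤ A i l)

/-- `χ(B)`: the sum of all the entries of `B⁻¹`. -/
noncomputable def chi {ι : Type*} [Fintype ι] [DecidableEq ι] (B : Matrix ι ι ℝ) : ℝ :=
  ∑ i, ∑ l, B⁻¹ i l

/-- The block sum `A₁ ⊞_s A₂`: `A₁` on the first block, `A₂` on the second, `s` off-block. -/
def blockSum {g h : ℕ} (A₁ : Matrix (Fin g) (Fin g) ℝ) (A₂ : Matrix (Fin h) (Fin h) ℝ)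
    (s : ℝ) : Matrix (Fin g ⊕ Fin h) (Fin g ⊕ Fin h) ℝ :=
  Matrix.fromBlocks A₁ (Matrix.of fun _ _ => s) (Matrix.of fun _ _ => s) A₂


/-! Once `A₁`, `A₂` and `A = A₁ ⊞_s A₂` are known to be invertible, the formula is linear algebra:
with `x₁ = A₁⁻¹ 1`, `x₂ = A₂⁻¹ 1`, `b = Σ x₁ = χ(A₁)`, `c = Σ x₂ = χ(A₂)`, the matrix `A` maps
`(α x₁, β x₂)` to `(α + s c β) 1 ⊕ (s b α + β) 1`, so `A⁻¹ 1` is obtained by inverting the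
`2 × 2` matrix `[[1, s c], [s b, 1]]`; its determinant `1 - s² b c` cannot vanish, since a kernel
vector would give one of `A`.

Invertibility comes from positive definiteness: with `ε = min η 1`, `A - ε I` is a nonnegative,
diagonally dominant ultrametric matrix, and such matrices are positive semidefinite. For the
latter, subtract the smallest entry `t ≥ 0` (a positive semidefinite multiple of the all-ones
matrix): by the ultrametric inequality what remains is block diagonal, with two smaller ultrametric
blocks.
-/

open Matrix Finset

lemma Finset.sum_sum_eq_add_of_eq_zero {ι M : Type*} [DecidableEq ι] [AddCommMonoid M]
    {S T : Finset ι} {f : ι → ι → M} (hST : S ⊆ T)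
    (hf : ∀ i ∈ S, ∀ l ∈ T \ S, f i l = 0 ∧ f l i = 0) :
    ∑ i ∈ T, ∑ l ∈ T, f i l = ∑ i ∈ S, ∑ l ∈ S, f i l + ∑ i ∈ T \ S, ∑ l ∈ T \ S, f i l := by
  have hS : ∀ i ∈ S, ∑ l ∈ T, f i l = ∑ l ∈ S, f i l := fun i hi =>
    (sum_subset hST fun l hlT hlS => (hf i hi l (mem_sdiff.2 ⟨hlT, hlS⟩)).1).symm
  have hTS : ∀ i ∈ T \ S, ∑ l ∈ T, f i l = ∑ l ∈ T \ S, f i l := fun i hi => by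
    rw [← sum_sdiff hST, sum_eq_zero fun l hl => (hf l hl i hi).2, add_zero]
  rw [← sum_sdiff hST, sum_congr rfl hTS, sum_congr rfl hS, add_comm]

lemma Finset.sum_sum_sub_const_mul {ι R : Type*} [CommRing R] (T : Finset ι) (A : ι → ι → R)
    (t : R) (x : ι → R) :
    ∑ i ∈ T, ∑ l ∈ T, A i l * x i * x l =
      ∑ i ∈ T, ∑ l ∈ T, (A i l - t) * x i * x l + t * (∑ i ∈ T, x i) ^ 2 := by
  have hsq : t * (∑ i ∈ T, x i) ^ 2 = ∑ i ∈ T, ∑ l ∈ T, t * x i * x l := by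
    rw [sq, sum_mul_sum]; simp only [mul_sum, mul_assoc]
  simp only [hsq, sub_mul, sum_sub_distrib, sub_add_cancel]

structure IsUltrametricOn {ι : Type*} (A : Matrix ι ι ℝ) (T : Finset ι) : Prop where
  symm : ∀ i ∈ T, ∀ l ∈ T, A i l = A l i
  nonneg : ∀ i ∈ T, ∀ l ∈ T, 0 ≤ A i l
  le_diag : ∀ i ∈ T, ∀ l ∈ T, A i l ≤ A i i
  min_le : ∀ i ∈ T, ∀ l ∈ T, ∀ p ∈ T, i ≠ l → l ≠ p → i ≠ p → min (A l p) (A i p) ≤ A i l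

namespace IsUltrametricOn

variable {ι : Type*} {A : Matrix ι ι ℝ} {S T : Finset ι}

lemma mono (hA : IsUltrametricOn A T) (hST : S ⊆ T) : IsUltrametricOn A S where
  symm i hi l hl := hA.symm i (hST hi) l (hST hl)
  nonneg i hi l hl := hA.nonneg i (hST hi) l (hST hl)
  le_diag i hi l hl := hA.le_diag i (hST hi) l (hST hl)
  min_le i hi l hl p hp := hA.min_le i (hST hi) l (hST hl) p (hST hp)

lemma sub_const (hA : IsUltrametricOn A T) {t : ℝ} (ht : ∀ i ∈ T, ∀ l ∈ T, t ≤ A i l) :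
    IsUltrametricOn (of fun i l => A i l - t) T where
  symm i hi l hl := by simp [hA.symm i hi l hl]
  nonneg i hi l hl := sub_nonneg.2 (ht i hi l hl)
  le_diag i hi l hl := sub_le_sub_right (hA.le_diag i hi l hl) t
  min_le i hi l hl p hp hil hlp hip := by
    simpa [min_sub_sub_right] using hA.min_le i hi l hl p hp hil hlp hip

lemma apply_le_of_le_of_lt (hA : IsUltrametricOn A T) {i₀ i l : ι} (hi₀ : i₀ ∈ T) (hi : i ∈ T)
    (hl : l ∈ T) {t : ℝ} (hi₀l : A i₀ l ≤ t) (hi₀i : t < A i₀ i) : A i l ≤ t := by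
  rcases eq_or_ne i i₀ with rfl | hii₀
  · exact hi₀l
  have hli : l ≠ i := by rintro rfl; exact hi₀i.not_ge hi₀l
  have hi₀l' : i₀ ≠ l := by
    rintro rfl; exact (hi₀i.trans_le (hA.le_diag i₀ hi₀ i hi)).not_ge hi₀l
  have hmin := (hA.min_le i₀ hi₀ l hl i hi hi₀l' hli hii₀.symm).trans hi₀l
  rw [hA.symm i hi l hl]
  exact (min_le_iff.1 hmin).resolve_right hi₀i.not_ge

lemma exists_split [DecidableEq ι] (hA : IsUltrametricOn A T) (hT : T.Nontrivial) :
    ∃ t S, 0 ≤ t ∧ S ⊂ T ∧ T \ S ⊂ T ∧ (∀ i ∈ T, ∀ l ∈ T, t ≤ A i l) ∧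
      ∀ i ∈ S, ∀ l ∈ T \ S, A i l = t := by
  obtain ⟨a, ha, b, hb, hab⟩ := id hT
  obtain ⟨⟨i₀, l₀⟩, hmem, hmin⟩ := T.offDiag.exists_min_image (fun p => A p.1 p.2)
    ⟨(a, b), mem_offDiag.2 ⟨ha, hb, hab⟩⟩
  obtain ⟨hi₀, hl₀, hi₀l₀⟩ := mem_offDiag.1 hmem
  set t := A i₀ l₀
  have hoff : ∀ i ∈ T, ∀ l ∈ T, i ≠ l → t ≤ A i l := fun i hi l hl hil =>
    hmin (i, l) (mem_offDiag.2 ⟨hi, hl, hil⟩)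
  have hle : ∀ i ∈ T, ∀ l ∈ T, t ≤ A i l := by
    intro i hi l hl
    rcases eq_or_ne i l with rfl | hil
    · obtain ⟨l', hl', hl'i⟩ := hT.exists_ne i
      exact (hoff i hi l' hl' hl'i.symm).trans (hA.le_diag i hi l' hl')
    · exact hoff i hi l hl hil
  set S := T.filter fun p => p = i₀ ∨ t < A i₀ p
  have hi₀S : i₀ ∈ S := mem_filter.2 ⟨hi₀, .inl rfl⟩
  have hl₀S : l₀ ∉ S := by simp [S, hi₀l₀.symm, t]
  refine ⟨t, S, hA.nonneg i₀ hi₀ l₀ hl₀, ?_, ?_, hle, ?_⟩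
  · exact ssubset_of_subset_of_ne (filter_subset _ _) fun h => hl₀S (h ▸ hl₀)
  · exact sdiff_ssubset (filter_subset _ _) ⟨i₀, hi₀S⟩
  · intro i hi l hl
    obtain ⟨hlT, hlS⟩ := mem_sdiff.1 hl
    have hi₀l : A i₀ l ≤ t := by
      by_contra h; exact hlS (mem_filter.2 ⟨hlT, .inr (not_le.1 h)⟩)
    refine le_antisymm ?_ (hle i (filter_subset _ _ hi) l hlT)
    obtain ⟨hiT, rfl | hi₀i⟩ := mem_filter.1 hi
    · exact hi₀l
    · exact hA.apply_le_of_le_of_lt hi₀ hiT hlT hi₀l hi₀i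

theorem sum_sum_mul_nonneg [DecidableEq ι] (hA : IsUltrametricOn A T) (x : ι → ℝ) :
    0 ≤ ∑ i ∈ T, ∑ l ∈ T, A i l * x i * x l := by
  induction T using Finset.strongInduction generalizing A with
  | H T ih =>
  rcases T.eq_empty_or_nonempty with rfl | hT
  · simp
  rcases hT.exists_eq_singleton_or_nontrivial with ⟨i, rfl⟩ | hT
  · simpa [mul_assoc] using mul_nonneg (hA.nonneg i (mem_singleton_self i) i
      (mem_singleton_self i)) (mul_self_nonneg (x i))
  obtain ⟨t, S, ht, hST, hTS, hle, hsplit⟩ := hA.exists_split hT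
  have hB := hA.sub_const hle
  rw [sum_sum_sub_const_mul T A t x, sum_sum_eq_add_of_eq_zero hST.subset]
  · exact add_nonneg (add_nonneg (ih S hST (hB.mono hST.subset))
      (ih (T \ S) hTS (hB.mono hTS.subset))) (mul_nonneg ht (sq_nonneg _))
  · intro i hi l hl
    have hil := hsplit i hi l hl
    rw [hA.symm i (hST.subset hi) l (mem_sdiff.1 hl).1] at hil
    simp [hsplit i hi l hl, hil]

end IsUltrametricOn

namespace MemUltra

variable {ι : Type*} [Fintype ι] [DecidableEq ι] {η : ℝ} {A : Matrix ι ι ℝ}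

lemma isUltrametricOn_sub_smul_one (hA : MemUltra η A) {ε : ℝ} (hεη : ε ≤ η) (hε : ε ≤ 1) :
    IsUltrametricOn (A - ε • 1) univ where
  symm i _ l _ := by simp [hA.1.apply l i, one_apply, eq_comm]
  nonneg i _ l _ := by
    rcases eq_or_ne i l with rfl | hil
    · simp [hA.2.1 i, hε]
    · simp [hil, (hA.2.2.1 i l hil).1]
  le_diag i _ l _ := by
    rcases eq_or_ne i l with rfl | hil
    · rfl
    · simp [hil, hA.2.1 i]; linarith [(hA.2.2.1 i l hil).2]
  min_le i _ l _ p _ hil hlp hip := by simpa [hil, hlp, hip] using hA.2.2.2 i l p hil hlp hip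

lemma posDef (hA : MemUltra η A) (hη : 0 < η) : A.PosDef := by
  have hsym : (A - min η 1 • 1).IsHermitian := by
    simp [isHermitian_iff_isSymm, IsSymm, transpose_sub, hA.1.eq]
  have hpsd : (A - min η 1 • 1).PosSemidef := by
    refine .of_dotProduct_mulVec_nonneg hsym fun x => ?_
    have hquad : star x ⬝ᵥ ((A - min η 1 • 1) *ᵥ x) =
        ∑ i, ∑ l, (A - min η 1 • 1) i l * x i * x l := by
      simp only [dotProduct, mulVec, star_trivial, mul_sum]
      exact sum_congr rfl fun i _ => sum_congr rfl fun l _ => by ring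
    rw [hquad]
    exact (hA.isUltrametricOn_sub_smul_one (min_le_left η 1) (min_le_right η 1)).sum_sum_mul_nonneg
      x
  simpa using PosDef.posSemidef_add hpsd (PosDef.one.smul (lt_min hη one_pos))

lemma isUnit_det (hA : MemUltra η A) (hη : 0 < η) : IsUnit A.det :=
  (A.isUnit_iff_isUnit_det).1 (hA.posDef hη).isUnit

end MemUltra

lemma MemUltra.fromBlocks_const {ι κ : Type*} [Fintype ι] [DecidableEq ι] [Fintype κ]
    [DecidableEq κ] {η s : ℝ} {A₁ : Matrix ι ι ℝ} {A₂ : Matrix κ κ ℝ}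
    (hA₁ : MemUltra η A₁) (hA₂ : MemUltra η A₂) (hs0 : 0 ≤ s) (hsη : s ≤ 1 - η)
    (hs₁ : ∀ i l, i ≠ l → s ≤ A₁ i l) (hs₂ : ∀ i l, i ≠ l → s ≤ A₂ i l) :
    MemUltra η (fromBlocks A₁ (of fun _ _ => s) (of fun _ _ => s) A₂) := by
  refine ⟨IsSymm.fromBlocks hA₁.1 rfl hA₂.1, ?_, ?_, ?_⟩
  · rintro (i | i)
    exacts [hA₁.2.1 i, hA₂.2.1 i]
  · rintro (i | i) (l | l) hil
    exacts [hA₁.2.2.1 i l (by simpa using hil), ⟨hs0, hsη⟩, ⟨hs0, hsη⟩,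
      hA₂.2.2.1 i l (by simpa using hil)]
  · rintro (i | i) (l | l) (p | p) hil hlp hip <;>
      simp only [ne_eq, Sum.inl.injEq, Sum.inr.injEq, reduceCtorEq, not_false_eq_true]
        at hil hlp hip <;>
      simp only [fromBlocks_apply₁₁, fromBlocks_apply₁₂, fromBlocks_apply₂₁, fromBlocks_apply₂₂,
        of_apply, min_self]
    exacts [hA₁.2.2.2 i l p hil hlp hip, hs₁ i l hil, min_le_left _ _, min_le_right _ _,
      min_le_right _ _, min_le_left _ _, hs₂ i l hil, hA₂.2.2.2 i l p hil hlp hip]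

section chi

variable {ι κ : Type*} [Fintype ι] [Fintype κ]

lemma chi_eq_sum_of_mulVec_eq_one [DecidableEq ι] {A : Matrix ι ι ℝ} (hA : IsUnit A.det)
    {y : ι → ℝ} (hy : A *ᵥ y = 1) : chi A = ∑ i, y i := by
  have hinv : A⁻¹ *ᵥ 1 = y := by rw [← hy, mulVec_mulVec, nonsing_inv_mul A hA, one_mulVec]
  simp [chi, ← hinv, mulVec, dotProduct]

lemma fromBlocks_const_mulVec_sumElim (A₁ : Matrix ι ι ℝ) (A₂ : Matrix κ κ ℝ) (s : ℝ)
    (y₁ : ι → ℝ) (y₂ : κ → ℝ) :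
    fromBlocks A₁ (of fun _ _ => s) (of fun _ _ => s) A₂ *ᵥ Sum.elim y₁ y₂ =
      Sum.elim (A₁ *ᵥ y₁ + fun _ => s * ∑ l, y₂ l) (A₂ *ᵥ y₂ + fun _ => s * ∑ l, y₁ l) := by
  rw [fromBlocks_mulVec]
  congr 1 <;> ext <;> simp [mulVec, dotProduct, mul_sum, add_comm]

variable [DecidableEq ι] [DecidableEq κ]

theorem chi_fromBlocks_const {A₁ : Matrix ι ι ℝ} {A₂ : Matrix κ κ ℝ} {s : ℝ}
    (h₁ : IsUnit A₁.det) (h₂ : IsUnit A₂.det)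
    (h : IsUnit (fromBlocks A₁ (of fun _ _ => s) (of fun _ _ => s) A₂).det) :
    chi (fromBlocks A₁ (of fun _ _ => s) (of fun _ _ => s) A₂) =
      (chi A₁ + chi A₂ - 2 * s * chi A₁ * chi A₂) / (1 - s ^ 2 * chi A₁ * chi A₂) := by
  set A := fromBlocks A₁ (of fun _ _ => s) (of fun _ _ => s) A₂
  have hx₁ : A₁ *ᵥ (A₁⁻¹ *ᵥ 1) = 1 := by rw [mulVec_mulVec, mul_nonsing_inv _ h₁, one_mulVec]
  have hx₂ : A₂ *ᵥ (A₂⁻¹ *ᵥ 1) = 1 := by rw [mulVec_mulVec, mul_nonsing_inv _ h₂, one_mulVec]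
  set x₁ := A₁⁻¹ *ᵥ 1
  set x₂ := A₂⁻¹ *ᵥ 1
  have hb := chi_eq_sum_of_mulVec_eq_one h₁ hx₁
  have hc := chi_eq_sum_of_mulVec_eq_one h₂ hx₂
  set b := chi A₁
  set c := chi A₂
  have hA (α β : ℝ) : A *ᵥ Sum.elim (α • x₁) (β • x₂) =
      Sum.elim (fun _ => α + s * c * β) (fun _ => s * b * α + β) := by
    rw [fromBlocks_const_mulVec_sumElim, mulVec_smul, mulVec_smul, hx₁, hx₂]
    ext (i | i) <;> simp [← mul_sum, hb, hc] <;> ring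
  have hD : 1 - s ^ 2 * b * c ≠ 0 := by
    intro hD
    have hker : Sum.elim (-(s * c) • x₁) ((1 : ℝ) • x₂) = 0 := by
      refine eq_zero_of_mulVec_eq_zero h.ne_zero ?_
      rw [hA]
      ext (i | i) <;> simp only [Sum.elim_inl, Sum.elim_inr, Pi.zero_apply]
      · ring
      · linear_combination hD
    have hx₂0 : x₂ = 0 := by simpa using congrArg (· ∘ Sum.inr) hker
    simp [hc, hx₂0] at hD
  rw [chi_eq_sum_of_mulVec_eq_one h (y := Sum.elim (((1 - s * c) / (1 - s ^ 2 * b * c)) • x₁)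
    (((1 - s * b) / (1 - s ^ 2 * b * c)) • x₂))]
  · simp only [Fintype.sum_sum_type, Sum.elim_inl, Sum.elim_inr, Pi.smul_apply, smul_eq_mul,
      ← mul_sum, ← hb, ← hc]
    ring
  · rw [hA]
    ext (i | i) <;> simp only [Sum.elim_inl, Sum.elim_inr, Pi.one_apply] <;>
      linear_combination mul_inv_cancel₀ hD

end chi

theorem chi_blockSum {η : ℝ} (hη : 0 < η) {g h : ℕ}
    (A₁ : Matrix (Fin g) (Fin g) ℝ) (A₂ : Matrix (Fin h) (Fin h) ℝ)
    (hA₁ : MemUltra η A₁) (hA₂ : MemUltra η A₂) (s : ℝ)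
    (hs0 : 0 ≤ s) (hsη : s ≤ 1 - η)
    (hs₁ : ∀ i l, i ≠ l → s ≤ A₁ i l) (hs₂ : ∀ i l, i ≠ l → s ≤ A₂ i l) :
    chi (blockSum A₁ A₂ s) =
      (chi A₁ + chi A₂ - 2 * s * chi A₁ * chi A₂) / (1 - s ^ 2 * chi A₁ * chi A₂) := by
  have hA := hA₁.fromBlocks_const hA₂ hs0 hsη hs₁ hs₂
  exact chi_fromBlocks_const (hA₁.isUnit_det hη) (hA₂.isUnit_det hη) (hA.isUnit_det hη)
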